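/- Let n be odd and ρ = c₁ξ₁ξ₁† + c₂ξ₂ξ₂† with c₁ + c₂ = 1, c₁, c₂ > 0, and ξ₁, ξ₂ ∈ ℂ^{2ⁿ} unit vectors. Then the Lorentz invariant satisfies I_ρ = -2c₁c₂|ξ₁ᵀ ε_n ξ₂|², and hence -1/2 ≤ I_ρ ≤ 0. -/

import Mathlib

/-!
For a rank-one `A = u u†` and `B = v v†`, the trace `Tr(Aᵀ E B E)` factors as
`(uᵀ E v) · (v† E ū)`. When `E` is real and skew (`Eᵀ = Eᴴ = -E`, as `ε_n` is for odd `n`) the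
second factor is `-conj (uᵀ E v)`, so the term is `-|uᵀ E v|²`, which vanishes for `u = v` and is
symmetric in `u, v`. Expanding `ρ = c₁ A + c₂ B` bilinearly leaves only the two cross terms.
Since `ε_n` is unitary, Cauchy–Schwarz gives `|ξ₁ᵀ ε_n ξ₂| ≤ 1`, and `c₁ c₂ ≤ 1/4` finishes.
-/

open Matrix

noncomputable def eps : Matrix (Fin 2) (Fin 2) ℂ := !![0, 1; -1, 0]

noncomputable def epsPow (n : ℕ) : Matrix (Fin n → Fin 2) (Fin n → Fin 2) ℂ :=
  Matrix.of fun i j => ∏ k, eps (i k) (j k)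

section Pairing

variable {V : Type*} [Fintype V]

theorem trace_vecMulVec_mul_vecMulVec_mul {R : Type*} [CommRing R] (a b c d : V → R)
    (E : Matrix V V R) :
    (vecMulVec a b * E * vecMulVec c d * E).trace = (b ⬝ᵥ E *ᵥ c) * (d ⬝ᵥ E *ᵥ a) := by
  rw [vecMulVec_mul, vecMulVec_mul_vecMulVec, vecMulVec_mul, trace_vecMulVec, smul_vecMul,
    dotProduct_smul, smul_eq_mul, dotProduct_mulVec, dotProduct_mulVec, dotProduct_comm a]

theorem dotProduct_mulVec_swap_of_transpose_eq_neg {R : Type*} [CommRing R]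
    {E : Matrix V V R} (hE : Eᵀ = -E) (u v : V → R) :
    v ⬝ᵥ E *ᵥ u = -(u ⬝ᵥ E *ᵥ v) := by
  rw [dotProduct_mulVec, ← mulVec_transpose, hE, neg_mulVec, neg_dotProduct, dotProduct_comm]

theorem dotProduct_mulVec_self_of_transpose_eq_neg {R : Type*} [CommRing R] [NoZeroDivisors R]
    [CharZero R] {E : Matrix V V R} (hE : Eᵀ = -E) (u : V → R) :
    u ⬝ᵥ E *ᵥ u = 0 :=
  CharZero.eq_neg_self_iff.mp (dotProduct_mulVec_swap_of_transpose_eq_neg hE u u)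

variable {𝕜 : Type*} [RCLike 𝕜]

theorem trace_transpose_vecMulVec_star_mul_vecMulVec_star_mul {E : Matrix V V 𝕜}
    (hE : Eᴴ = -E) (u v : V → 𝕜) :
    ((vecMulVec u (star u))ᵀ * E * vecMulVec v (star v) * E).trace
      = -((‖u ⬝ᵥ E *ᵥ v‖ ^ 2 : ℝ) : 𝕜) := by
  have hconj : star (u ⬝ᵥ E *ᵥ v) = -(star v ⬝ᵥ E *ᵥ star u) := by
    rw [← star_dotProduct_star, star_mulVec, ← dotProduct_mulVec, hE, neg_mulVec,
      dotProduct_neg]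
  rw [transpose_vecMulVec, trace_vecMulVec_mul_vecMulVec_mul, ← neg_neg (star v ⬝ᵥ _), ← hconj,
    mul_neg, RCLike.star_def, RCLike.mul_conj, RCLike.ofReal_pow]

theorem trace_transpose_mixture_mul_mixture_mul {E : Matrix V V 𝕜} (hskew : Eᵀ = -E)
    (hanti : Eᴴ = -E) (c₁ c₂ : ℝ) (u v : V → 𝕜) :
    (((c₁ : 𝕜) • vecMulVec u (star u) + (c₂ : 𝕜) • vecMulVec v (star v))ᵀ * E *
        ((c₁ : 𝕜) • vecMulVec u (star u) + (c₂ : 𝕜) • vecMulVec v (star v)) * E).trace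
      = ((-2 * c₁ * c₂ * ‖u ⬝ᵥ E *ᵥ v‖ ^ 2 : ℝ) : 𝕜) := by
  have hvu : ‖v ⬝ᵥ E *ᵥ u‖ = ‖u ⬝ᵥ E *ᵥ v‖ := by
    rw [dotProduct_mulVec_swap_of_transpose_eq_neg hskew, norm_neg]
  simp only [transpose_add, transpose_smul, Matrix.add_mul, Matrix.mul_add, Matrix.smul_mul,
    Matrix.mul_smul, trace_add, trace_smul, smul_eq_mul,
    trace_transpose_vecMulVec_star_mul_vecMulVec_star_mul hanti,
    dotProduct_mulVec_self_of_transpose_eq_neg hskew, norm_zero, hvu]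
  push_cast
  ring

theorem norm_dotProduct_le (u w : V → 𝕜) :
    ‖u ⬝ᵥ w‖ ≤ √(∑ i, ‖u i‖ ^ 2) * √(∑ i, ‖w i‖ ^ 2) := by
  have h := norm_inner_le_norm (𝕜 := 𝕜) (WithLp.toLp 2 (star u)) (WithLp.toLp 2 w)
  rw [EuclideanSpace.inner_toLp_toLp, star_star, dotProduct_comm, EuclideanSpace.norm_eq,
    EuclideanSpace.norm_eq] at h
  simpa only [WithLp.ofLp_toLp, Pi.star_apply, norm_star] using h

theorem sum_norm_sq_eq_star_dotProduct (w : V → 𝕜) :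
    ((∑ i, ‖w i‖ ^ 2 : ℝ) : 𝕜) = star w ⬝ᵥ w := by
  simp only [RCLike.ofReal_sum, RCLike.ofReal_pow, dotProduct, Pi.star_apply, RCLike.star_def,
    RCLike.conj_mul]

theorem sum_norm_sq_mulVec_of_conjTranspose_mul_self [DecidableEq V] {E : Matrix V V 𝕜}
    (hE : Eᴴ * E = 1) (v : V → 𝕜) : ∑ i, ‖(E *ᵥ v) i‖ ^ 2 = ∑ i, ‖v i‖ ^ 2 := by
  apply RCLike.ofReal_injective (K := 𝕜)
  rw [sum_norm_sq_eq_star_dotProduct, sum_norm_sq_eq_star_dotProduct, star_mulVec,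
    ← dotProduct_mulVec, mulVec_mulVec, hE, one_mulVec]

theorem norm_dotProduct_mulVec_le_one [DecidableEq V] {E : Matrix V V 𝕜} (hE : Eᴴ * E = 1)
    {u v : V → 𝕜} (hu : ∑ i, ‖u i‖ ^ 2 = 1) (hv : ∑ i, ‖v i‖ ^ 2 = 1) : ‖u ⬝ᵥ E *ᵥ v‖ ≤ 1 := by
  simpa only [sum_norm_sq_mulVec_of_conjTranspose_mul_self hE, hu, hv, Real.sqrt_one, mul_one]
    using norm_dotProduct_le u (E *ᵥ v)

end Pairing

theorem transpose_eps : epsᵀ = -eps := by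
  ext i j; fin_cases i <;> fin_cases j <;> simp [eps]

theorem star_eps_apply (a b : Fin 2) : star (eps a b) = eps a b := by
  fin_cases a <;> fin_cases b <;> simp [eps]

theorem transpose_eps_mul_eps : epsᵀ * eps = 1 := by
  ext i j; fin_cases i <;> fin_cases j <;> simp [eps, mul_apply, Fin.sum_univ_two]

theorem transpose_epsPow (n : ℕ) : (epsPow n)ᵀ = (-1 : ℂ) ^ n • epsPow n := by
  ext i j
  have h : ∀ k, eps (j k) (i k) = -eps (i k) (j k) := fun k => by
    rw [← transpose_apply eps, transpose_eps, neg_apply]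
  simp only [transpose_apply, Matrix.smul_apply, epsPow, of_apply, smul_eq_mul, h,
    Finset.prod_neg, Finset.card_univ, Fintype.card_fin]

theorem conjTranspose_epsPow (n : ℕ) : (epsPow n)ᴴ = (epsPow n)ᵀ := by
  ext i j
  simp only [conjTranspose_apply, transpose_apply, epsPow, of_apply, star_prod, star_eps_apply]

theorem transpose_epsPow_mul_epsPow (n : ℕ) : (epsPow n)ᵀ * epsPow n = 1 := by
  ext i j
  have h : ∀ a b : Fin 2, ∑ c, eps c a * eps c b = if a = b then 1 else 0 := fun a b => by
    rw [← one_apply, ← transpose_eps_mul_eps, mul_apply]; rfl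
  simp only [mul_apply, transpose_apply, epsPow, of_apply, ← Finset.prod_mul_distrib]
  rw [← Fintype.prod_sum (fun m c => eps c (i m) * eps c (j m))]
  simp only [h, Fintype.prod_boole, one_apply, ← funext_iff]

theorem stmt6 (n : ℕ) (hn : Odd n) (c1 c2 : ℝ) (hc : c1 + c2 = 1)
    (hc1 : 0 < c1) (hc2 : 0 < c2)
    (ξ1 ξ2 : (Fin n → Fin 2) → ℂ)
    (hu1 : (∑ i, ‖ξ1 i‖ ^ 2) = 1)
    (hu2 : (∑ i, ‖ξ2 i‖ ^ 2) = 1) :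
    (((c1 : ℂ) • vecMulVec ξ1 (star ξ1) + (c2 : ℂ) • vecMulVec ξ2 (star ξ2))ᵀ
        * epsPow n *
      ((c1 : ℂ) • vecMulVec ξ1 (star ξ1) + (c2 : ℂ) • vecMulVec ξ2 (star ξ2))
        * epsPow n).trace
      = ((-2 * c1 * c2 * ‖ξ1 ⬝ᵥ (epsPow n *ᵥ ξ2)‖ ^ 2 : ℝ) : ℂ) ∧
    -(1 / 2) ≤ -2 * c1 * c2 * ‖ξ1 ⬝ᵥ (epsPow n *ᵥ ξ2)‖ ^ 2 ∧
    -2 * c1 * c2 * ‖ξ1 ⬝ᵥ (epsPow n *ᵥ ξ2)‖ ^ 2 ≤ 0 := by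
  have hskew : (epsPow n)ᵀ = -epsPow n := by
    rw [transpose_epsPow, hn.neg_one_pow, neg_one_smul]
  have hanti : (epsPow n)ᴴ = -epsPow n := (conjTranspose_epsPow n).trans hskew
  have hunitary : (epsPow n)ᴴ * epsPow n = 1 := by
    rw [conjTranspose_epsPow, transpose_epsPow_mul_epsPow]
  have hs := norm_dotProduct_mulVec_le_one hunitary hu1 hu2
  have hs0 := norm_nonneg (ξ1 ⬝ᵥ (epsPow n *ᵥ ξ2))
  have hc12 : c1 * c2 ≤ 1 / 4 := by nlinarith [sq_nonneg (c1 - c2)]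
  refine ⟨trace_transpose_mixture_mul_mixture_mul hskew hanti c1 c2 ξ1 ξ2, ?_, ?_⟩
  · nlinarith [mul_pos hc1 hc2, mul_le_one₀ hs hs0 hs]
  · nlinarith [mul_pos hc1 hc2]
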